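/- (Truthfulness of BTR via critical values, buyer side.) In the BTR mechanism, a trading buyer's payment equals her critical value for trading: if the efficient trade size is q and b^(q+1) ≥ s^(q), each of the top q buyers trades and would continue to trade with any bid strictly above b^(q+1), and would not trade with any bid strictly below b^(q+1); if b^(q+1) < s^(q), each of the top q-1 buyers trades and her critical value is b^(q). -/

import Mathlib

/-- The multiset of values of the bid vector `v`, sorted ascendingly. -/
noncomputable def ascVals {n : ℕ} (v : Fin n → ℝ) : List ℝ :=
  (Finset.univ.val.map v).sort (· ≤ ·)

/-- The `(j+1)`-st lowest seller bid (`s^(j+1)` in 1-indexed notation). -/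
noncomputable def sVal {n : ℕ} (s : Fin n → ℝ) (j : ℕ) : ℝ :=
  (ascVals s).getD j 0

/-- The `(j+1)`-st highest buyer bid (`b^(j+1)` in 1-indexed notation). -/
noncomputable def bVal {n : ℕ} (b : Fin n → ℝ) (j : ℕ) : ℝ :=
  (ascVals b).getD (n - 1 - j) 0

/-- The efficient trade size: the number of indices `j` with `b^(j) ≥ s^(j)` (ties in favor of
buyers). -/
noncomputable def tradeSize {nS nB : ℕ} (s : Fin nS → ℝ) (b : Fin nB → ℝ) : ℕ :=
  ((Finset.range (min nS nB)).filter fun j => sVal s j ≤ bVal b j).card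

/-- The number of buyers bidding ahead of buyer `i` (higher bid, or equal bid with smaller
ID). -/
noncomputable def buyerRank {n : ℕ} (b : Fin n → ℝ) (i : Fin n) : ℕ :=
  (Finset.univ.filter fun j => b i < b j ∨ (b j = b i ∧ j < i)).card

/-- Whether buyer `i` trades in the BTR mechanism on bids `(s, b)`: the top `q` buyers trade if
`b^(q+1)` exists and `b^(q+1) ≥ s^(q)`, and otherwise only the top `q-1` buyers trade. -/
noncomputable def buyerTrades {nS nB : ℕ} (s : Fin nS → ℝ) (b : Fin nB → ℝ)
    (i : Fin nB) : Prop :=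
  if tradeSize s b < nB ∧ sVal s (tradeSize s b - 1) ≤ bVal b (tradeSize s b) then
    buyerRank b i < tradeSize s b
  else
    buyerRank b i < tradeSize s b - 1

/-!
Let `k` be the number of buyers that BTR lets trade. Unfolding the two cases of the mechanism,
`k` is the largest index with `s^(k) ≤ b^(k+1)`, so buyer `i` trades iff fewer than `k` buyers
rank ahead of her. If she is among the top `k`, then `p = b^(k+1)` is the `k`-th highest bid of
the other buyers. A bid `β > p` keeps `s^(k) ≤ p ≤ b'^(k+1)`, so at least `k` buyers still trade,
while fewer than `k` others bid `≥ β`. A bid `β < p` lowers the bid vector, hence (the count being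
monotone in the bids) at most `k` buyers trade, while at least `k` others bid above `β`.
-/

open Finset Function

section SortedList

variable {α : Type*} [Preorder α]

theorem List.SortedLE.length_sub_le_countP_iff {L : List α} (hL : L.SortedLE)
    {Q : α → Prop} [DecidablePred Q] (hQ : Monotone Q) {m : ℕ} (hm : m < L.length) :
    L.length - m ≤ L.countP (fun a => decide (Q a)) ↔ Q L[m] := by
  constructor
  · intro hcount
    by_contra hQm
    have htake : (L.take (m + 1)).countP (fun a => decide (Q a)) = 0 := by
      refine List.countP_eq_zero.2 fun a ha hQa => hQm ?_
      obtain ⟨j, hj, rfl⟩ := List.mem_take_iff_getElem.1 ha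
      exact hQ (hL.getElem_le_getElem_of_le (by omega)) (of_decide_eq_true hQa)
    have hsplit := congrArg (List.countP fun a => decide (Q a)) (L.take_append_drop (m + 1))
    rw [List.countP_append, htake] at hsplit
    have hdrop := (L.drop (m + 1)).countP_le_length (p := fun a => decide (Q a))
    rw [List.length_drop] at hdrop
    omega
  · intro hQm
    have hdrop : (L.drop m).countP (fun a => decide (Q a)) = L.length - m := by
      rw [← List.length_drop, List.countP_eq_length]
      intro a ha
      obtain ⟨j, hj, rfl⟩ := List.mem_drop_iff_getElem.1 ha
      exact decide_eq_true (hQ (hL.getElem_le_getElem_of_le (by omega)) hQm)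
    exact hdrop ▸ (L.drop_sublist m).countP_le

end SortedList

section OrderStatistics

variable {n : ℕ} (v : Fin n → ℝ)

theorem length_ascVals : (ascVals v).length = n := by
  simp [ascVals]

theorem sortedLE_ascVals : (ascVals v).SortedLE :=
  (Multiset.pairwise_sort _ _).sortedLE

theorem countP_ascVals (Q : ℝ → Prop) [DecidablePred Q] :
    (ascVals v).countP (fun a => decide (Q a)) = #{k | Q (v k)} := by
  change ((ascVals v : List ℝ) : Multiset ℝ).countP Q = _
  rw [ascVals, Multiset.sort_eq, Multiset.countP_map]
  simp [Finset.filter, Finset.card]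

theorem ascVals_getD_mono {j k : ℕ} (hjk : j ≤ k) (hk : k < n) :
    (ascVals v).getD j 0 ≤ (ascVals v).getD k 0 := by
  have hlen := length_ascVals v
  rw [List.getD_eq_getElem _ _ (by omega), List.getD_eq_getElem _ _ (by omega)]
  exact (sortedLE_ascVals v).getElem_le_getElem_of_le hjk

theorem sVal_le_sVal {j k : ℕ} (hjk : j ≤ k) (hk : k < n) : sVal v j ≤ sVal v k :=
  ascVals_getD_mono v hjk hk

theorem bVal_le_bVal {j k : ℕ} (hjk : j ≤ k) (hk : k < n) : bVal v k ≤ bVal v j :=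
  ascVals_getD_mono v (by omega) (by omega)

theorem bVal_mem_iff {Q : ℝ → Prop} [DecidablePred Q] (hQ : Monotone Q) {j : ℕ} (hj : j < n) :
    Q (bVal v j) ↔ j < #{k | Q (v k)} := by
  have hlen := length_ascVals v
  rw [bVal, List.getD_eq_getElem _ _ (by omega),
    ← (sortedLE_ascVals v).length_sub_le_countP_iff hQ, countP_ascVals, hlen]
  omega

theorem le_bVal_iff {j : ℕ} (hj : j < n) (t : ℝ) : t ≤ bVal v j ↔ j < #{k | t ≤ v k} :=
  bVal_mem_iff v (fun _ _ hab hta => le_trans hta hab) hj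

theorem lt_bVal_iff {j : ℕ} (hj : j < n) (t : ℝ) : t < bVal v j ↔ j < #{k | t < v k} :=
  bVal_mem_iff v (fun _ _ hab hta => lt_of_lt_of_le hta hab) hj

theorem bVal_mono {v w : Fin n → ℝ} (hvw : v ≤ w) {j : ℕ} (hj : j < n) :
    bVal v j ≤ bVal w j := by
  rw [le_bVal_iff w hj]
  exact ((le_bVal_iff v hj _).1 le_rfl).trans_le
    (card_le_card (monotone_filter_right _ fun k _ hk => hk.trans (hvw k)))

end OrderStatistics

theorem lt_card_filter_range_iff {m j : ℕ} {P : ℕ → Prop} [DecidablePred P]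
    (hP : ∀ i k, i ≤ k → k < m → P k → P i) : j < #{i ∈ range m | P i} ↔ j < m ∧ P j := by
  constructor
  · intro hj
    by_contra hPj
    have hsub : {i ∈ range m | P i} ⊆ range j := fun i hi => by
      simp only [mem_filter, mem_range] at hi ⊢
      by_contra hij
      exact hPj ⟨by omega, hP j i (by omega) hi.1 hi.2⟩
    have := card_le_card hsub
    rw [card_range] at this
    omega
  · rintro ⟨hjm, hPj⟩
    have hsub : range (j + 1) ⊆ {i ∈ range m | P i} := fun i hi => by
      simp only [mem_filter, mem_range] at hi ⊢
      exact ⟨by omega, hP i j (by omega) hjm hPj⟩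
    simpa using card_le_card hsub

noncomputable def btrTradeCount {nS nB : ℕ} (s : Fin nS → ℝ) (b : Fin nB → ℝ) : ℕ :=
  #{j ∈ range (min nS (nB - 1)) | sVal s j ≤ bVal b (j + 1)}

section TradeCount

variable {nS nB : ℕ} {s : Fin nS → ℝ} {b : Fin nB → ℝ}

theorem lt_tradeSize_iff {j : ℕ} : j < tradeSize s b ↔ j < min nS nB ∧ sVal s j ≤ bVal b j :=
  lt_card_filter_range_iff fun _ _ hik hk h =>
    (sVal_le_sVal s hik (by omega)).trans (h.trans (bVal_le_bVal b hik (by omega)))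

theorem lt_btrTradeCount_iff {j : ℕ} :
    j < btrTradeCount s b ↔ j < min nS (nB - 1) ∧ sVal s j ≤ bVal b (j + 1) :=
  lt_card_filter_range_iff fun _ _ hik hk h =>
    (sVal_le_sVal s hik (by omega)).trans (h.trans (bVal_le_bVal b (by omega) (by omega)))

theorem btrTradeCount_mono {b' : Fin nB → ℝ} (hb : b ≤ b') :
    btrTradeCount s b ≤ btrTradeCount s b' :=
  card_le_card <| monotone_filter_right _ fun j hj h => by
    rw [mem_range] at hj
    exact h.trans (bVal_mono hb (by omega))

theorem btrTradeCount_eq : btrTradeCount s b =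
    if tradeSize s b < nB ∧ sVal s (tradeSize s b - 1) ≤ bVal b (tradeSize s b) then
      tradeSize s b else tradeSize s b - 1 := by
  refine eq_of_forall_lt_iff fun j => ?_
  rw [lt_btrTradeCount_iff]
  rcases lt_trichotomy (j + 1) (tradeSize s b) with h | h | h
  · obtain ⟨hm, hle⟩ := lt_tradeSize_iff.1 h
    have hj : j < if tradeSize s b < nB ∧ sVal s (tradeSize s b - 1) ≤ bVal b (tradeSize s b) then
        tradeSize s b else tradeSize s b - 1 := by split_ifs <;> omega
    simp only [hj, iff_true]
    exact ⟨by omega, (sVal_le_sVal s j.le_succ (by omega)).trans hle⟩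
  · have hjS : j < nS :=
      (lt_tradeSize_iff.1 (h ▸ j.lt_succ_self : j < tradeSize s b)).1.trans_le (min_le_left _ _)
    rw [← h, Nat.add_sub_cancel]
    have hmin : j < min nS (nB - 1) ↔ j + 1 < nB := by omega
    rw [hmin]
    split_ifs with hc
    · exact iff_of_true hc (lt_add_one j)
    · exact iff_of_false hc (lt_irrefl j)
  · have hj : ¬ j < if tradeSize s b < nB ∧ sVal s (tradeSize s b - 1) ≤ bVal b (tradeSize s b) then
        tradeSize s b else tradeSize s b - 1 := by split_ifs <;> omega
    simp only [hj, iff_false]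
    rintro ⟨hm, hle⟩
    have := lt_tradeSize_iff.2 ⟨by omega, hle.trans (bVal_le_bVal b j.le_succ (by omega))⟩
    omega

theorem buyerTrades_iff {i : Fin nB} : buyerTrades s b i ↔ buyerRank b i < btrTradeCount s b := by
  rw [buyerTrades, btrTradeCount_eq]
  split_ifs <;> rfl

end TradeCount

theorem card_filter_update {ι α : Type*} [Fintype ι] [DecidableEq ι] (Q : α → Prop)
    [DecidablePred Q] (v : ι → α) (i : ι) (a : α) :
    #{j | Q (update v i a j)} = #{j ∈ univ.erase i | Q (v j)} + if Q a then 1 else 0 := by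
  rw [card_filter, card_filter, ← add_sum_erase _ _ (mem_univ i), update_self, add_comm]
  congr 1
  exact sum_congr rfl fun j hj => by rw [update_of_ne (ne_of_mem_erase hj)]

section Rank

variable {n : ℕ} (v : Fin n → ℝ) (i : Fin n)

theorem buyerRank_update_self_le (β : ℝ) :
    buyerRank (update v i β) i ≤ #{j ∈ univ.erase i | β ≤ v j} := by
  refine card_le_card fun j hj => ?_
  simp only [mem_filter, mem_univ, true_and, update_self] at hj
  have hji : j ≠ i := by
    rintro rfl
    simp at hj
  rw [update_of_ne hji] at hj
  simp only [mem_filter, mem_erase, mem_univ, and_true]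
  exact ⟨hji, hj.elim le_of_lt fun h => h.1.ge⟩

theorem card_lt_le_buyerRank_update_self (β : ℝ) :
    #{j ∈ univ.erase i | β < v j} ≤ buyerRank (update v i β) i := by
  refine card_le_card fun j hj => ?_
  simp only [mem_filter, mem_erase, mem_univ, and_true] at hj
  simp only [mem_filter, mem_univ, true_and, update_self, update_of_ne hj.1]
  exact Or.inl hj.2

variable {v i} {k : ℕ} (hk : k < n) (hi : buyerRank v i < k)
include hk hi

theorem bVal_le_of_buyerRank_lt : bVal v k ≤ v i := by
  by_contra! h
  have h₁ := (lt_bVal_iff v hk _).1 h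
  have h₂ : #{j | v i < v j} ≤ buyerRank v i :=
    card_le_card (monotone_filter_right _ fun _ _ h => Or.inl h)
  omega

theorem le_card_erase_bVal_le : k ≤ #{j ∈ univ.erase i | bVal v k ≤ v j} := by
  have h := (le_bVal_iff v hk _).1 le_rfl
  rw [← update_eq_self i v, card_filter_update, update_eq_self,
    if_pos (bVal_le_of_buyerRank_lt hk hi)] at h
  omega

theorem card_erase_bVal_lt_lt : #{j ∈ univ.erase i | bVal v k < v j} < k := by
  have h : ¬ bVal v k < bVal v k := lt_irrefl _
  rw [lt_bVal_iff v hk, not_lt, ← update_eq_self i v, card_filter_update, update_eq_self] at h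
  split_ifs at h with hlt
  · omega
  · have hvi : v i = bVal v k := le_antisymm (not_lt.1 hlt) (bVal_le_of_buyerRank_lt hk hi)
    have := card_lt_le_buyerRank_update_self v i (v i)
    rw [update_eq_self, hvi] at this
    omega

end Rank

section CriticalValue

variable {nS nB : ℕ} {s : Fin nS → ℝ} {b : Fin nB → ℝ} {i : Fin nB}

theorem btrTradeCount_lt (hB : 0 < nB) : btrTradeCount s b < nB := by
  have : btrTradeCount s b ≤ min nS (nB - 1) := (card_filter_le _ _).trans_eq (card_range _)
  omega

theorem buyerTrades_update_of_bVal_lt (hi : buyerRank b i < btrTradeCount s b) {β : ℝ}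
    (hβ : bVal b (btrTradeCount s b) < β) : buyerTrades s (update b i β) i := by
  have hk := btrTradeCount_lt (s := s) (b := b) i.pos
  obtain ⟨hkm, hsk⟩ := lt_btrTradeCount_iff.1 (Nat.sub_one_lt_of_lt hi)
  generalize btrTradeCount s b = k at hi hβ hk hkm hsk
  have hpk : bVal b k ≤ bVal (update b i β) k := by
    rw [le_bVal_iff _ hk, card_filter_update, if_pos hβ.le]
    have := le_card_erase_bVal_le hk hi
    omega
  have hk' : k - 1 < btrTradeCount s (update b i β) := by
    refine lt_btrTradeCount_iff.2 ⟨hkm, ?_⟩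
    rw [Nat.sub_add_cancel (by omega)] at hsk ⊢
    exact hsk.trans hpk
  rw [buyerTrades_iff]
  calc buyerRank (update b i β) i ≤ #{j ∈ univ.erase i | β ≤ b j} :=
        buyerRank_update_self_le b i β
    _ ≤ #{j ∈ univ.erase i | bVal b k < b j} :=
        card_le_card (monotone_filter_right _ fun _ _ h => hβ.trans_le h)
    _ < k := card_erase_bVal_lt_lt hk hi
    _ ≤ btrTradeCount s (update b i β) := by omega

theorem not_buyerTrades_update_of_lt_bVal (hi : buyerRank b i < btrTradeCount s b) {β : ℝ}
    (hβ : β < bVal b (btrTradeCount s b)) : ¬ buyerTrades s (update b i β) i := by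
  have hk := btrTradeCount_lt (s := s) (b := b) i.pos
  rw [buyerTrades_iff, not_lt]
  generalize hkdef : btrTradeCount s b = k at hi hβ hk
  have hlower : update b i β ≤ b :=
    update_le_self_iff.2 (hβ.le.trans (bVal_le_of_buyerRank_lt hk hi))
  calc btrTradeCount s (update b i β) ≤ k := hkdef ▸ btrTradeCount_mono hlower
    _ ≤ #{j ∈ univ.erase i | bVal b k ≤ b j} := le_card_erase_bVal_le hk hi
    _ ≤ #{j ∈ univ.erase i | β < b j} :=
        card_le_card (monotone_filter_right _ fun _ _ h => hβ.trans_le h)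
    _ ≤ buyerRank (update b i β) i := card_lt_le_buyerRank_update_self b i β

theorem buyerTrades_critical_value (hi : buyerRank b i < btrTradeCount s b) :
    buyerTrades s b i
    ∧ (∀ β : ℝ, bVal b (btrTradeCount s b) < β → buyerTrades s (update b i β) i)
    ∧ (∀ β : ℝ, β < bVal b (btrTradeCount s b) → ¬ buyerTrades s (update b i β) i) :=
  ⟨buyerTrades_iff.2 hi, fun _ => buyerTrades_update_of_bVal_lt hi,
    fun _ => not_buyerTrades_update_of_lt_bVal hi⟩

end CriticalValue

/-- Truthfulness of BTR via critical values, buyer side: if `b^(q+1) ≥ s^(q)` (with `q` the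
efficient trade size), each of the top `q` buyers trades, continues to trade with any bid
strictly above `b^(q+1)`, and does not trade with any bid strictly below `b^(q+1)`; if
`b^(q+1) < s^(q)`, each of the top `q-1` buyers trades and her critical value is `b^(q)`. -/
theorem btr_buyer_critical_values (nS nB : ℕ) (s : Fin nS → ℝ) (b : Fin nB → ℝ) :
    ((tradeSize s b < nB ∧ sVal s (tradeSize s b - 1) ≤ bVal b (tradeSize s b)) →
      ∀ i : Fin nB, buyerRank b i < tradeSize s b →
        buyerTrades s b i
        ∧ (∀ β : ℝ, bVal b (tradeSize s b) < β →
            buyerTrades s (Function.update b i β) i)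
        ∧ (∀ β : ℝ, β < bVal b (tradeSize s b) →
            ¬ buyerTrades s (Function.update b i β) i))
    ∧ (¬(tradeSize s b < nB ∧ sVal s (tradeSize s b - 1) ≤ bVal b (tradeSize s b)) →
      ∀ i : Fin nB, buyerRank b i < tradeSize s b - 1 →
        buyerTrades s b i
        ∧ (∀ β : ℝ, bVal b (tradeSize s b - 1) < β →
            buyerTrades s (Function.update b i β) i)
        ∧ (∀ β : ℝ, β < bVal b (tradeSize s b - 1) →
            ¬ buyerTrades s (Function.update b i β) i)) := by
  have critical := fun i => buyerTrades_critical_value (s := s) (b := b) (i := i)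
  rw [btrTradeCount_eq] at critical
  constructor
  · intro hc
    simpa only [if_pos hc] using critical
  · intro hc
    simpa only [if_neg hc] using critical
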